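/- The single-partite real embedding preserves measurement statistics: for every complex density matrix ρ (Hermitian, positive semi-definite, trace one) and every Hermitian effect E, tr(ρE) = tr(M(ρ)·Γ(E)) where M(ρ) := (1/2)Γ(ρ); moreover M(ρ) is a real symmetric positive semi-definite matrix of trace one. -/

import Mathlib

/-
Γ is a homomorphism of real algebras that turns conjugate transposes into transposes and whose
trace is twice the real part of the trace. Writing ρ = Bᴴ B therefore gives Γ(ρ) = Γ(B)ᵀ Γ(B),
which is positive semidefinite, and tr(Γ(ρ) Γ(E)) = tr Γ(ρE) = 2 Re tr(ρE) = 2 tr(ρE), the last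
trace being real because ρ and E are Hermitian.
-/

open Kronecker Matrix
open scoped ComplexOrder

/-- 2×2 rotation matrix J = [[0,-1],[1,0]]. -/
def Jmat : Matrix (Fin 2) (Fin 2) ℝ := !![0, -1; 1, 0]

/-- Entrywise real part of a complex matrix. -/
def reM {d : ℕ} (A : Matrix (Fin d) (Fin d) ℂ) : Matrix (Fin d) (Fin d) ℝ :=
  A.map Complex.re

/-- Entrywise imaginary part of a complex matrix. -/
def imM {d : ℕ} (A : Matrix (Fin d) (Fin d) ℂ) : Matrix (Fin d) (Fin d) ℝ :=
  A.map Complex.im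

/-- The standard complex-to-real mapping Γ(A) = I ⊗ Re(A) + J ⊗ Im(A). -/
def Gamma {d : ℕ} (A : Matrix (Fin d) (Fin d) ℂ) :
    Matrix (Fin 2 × Fin d) (Fin 2 × Fin d) ℝ :=
  (1 : Matrix (Fin 2) (Fin 2) ℝ) ⊗ₖ reM A + Jmat ⊗ₖ imM A

namespace Matrix

variable {α l m n p : Type*} [Ring α]

theorem neg_kronecker (A : Matrix l m α) (B : Matrix n p α) : (-A) ⊗ₖ B = -(A ⊗ₖ B) := by
  ext; simp [kroneckerMap_apply]

theorem kronecker_neg (A : Matrix l m α) (B : Matrix n p α) : A ⊗ₖ (-B) = -(A ⊗ₖ B) := by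
  ext; simp [kroneckerMap_apply]

theorem IsHermitian.ofReal_re_trace_mul [Fintype n] {A B : Matrix n n ℂ}
    (hA : A.IsHermitian) (hB : B.IsHermitian) : ((A * B).trace.re : ℂ) = (A * B).trace := by
  rw [← Complex.conj_eq_iff_re, ← Complex.star_def, ← trace_conjTranspose, conjTranspose_mul,
    hA.eq, hB.eq, trace_mul_comm]

end Matrix

lemma Jmat_mul_self : Jmat * Jmat = -1 := by
  ext i j; fin_cases i <;> fin_cases j <;> simp [Jmat]

lemma transpose_Jmat : Jmatᵀ = -Jmat := by
  ext i j; fin_cases i <;> fin_cases j <;> simp [Jmat]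

lemma trace_Jmat : Jmat.trace = 0 := by
  simp [Jmat, trace_fin_two]

section

variable {d : ℕ} (A B : Matrix (Fin d) (Fin d) ℂ)

lemma reM_mul : reM (A * B) = reM A * reM B - imM A * imM B := by
  ext i j; simp [reM, imM, mul_apply, Complex.re_sum]

lemma imM_mul : imM (A * B) = reM A * imM B + imM A * reM B := by
  ext i j; simp [reM, imM, mul_apply, Complex.im_sum, Finset.sum_add_distrib]

lemma reM_conjTranspose : reM Aᴴ = (reM A)ᵀ := by
  ext i j; simp [reM]

lemma imM_conjTranspose : imM Aᴴ = -(imM A)ᵀ := by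
  ext i j; simp [imM]

lemma trace_reM : (reM A).trace = A.trace.re := by
  simp [reM, trace, Complex.re_sum]

lemma Gamma_mul : Gamma (A * B) = Gamma A * Gamma B := by
  simp only [Gamma, reM_mul, imM_mul, add_mul, mul_add, ← mul_kronecker_mul, one_mul, mul_one,
    Jmat_mul_self, kronecker_add, sub_eq_add_neg, neg_kronecker, kronecker_neg]
  abel

lemma Gamma_conjTranspose : Gamma Aᴴ = (Gamma A)ᵀ := by
  simp only [Gamma, reM_conjTranspose, imM_conjTranspose, transpose_add, ← kroneckerMap_transpose,
    transpose_one, transpose_Jmat, neg_kronecker, kronecker_neg]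

lemma trace_Gamma : (Gamma A).trace = 2 * A.trace.re := by
  simp [Gamma, trace_kronecker, trace_Jmat, trace_reM]

lemma isSymm_Gamma {A : Matrix (Fin d) (Fin d) ℂ} (hA : A.IsHermitian) : (Gamma A).IsSymm := by
  rw [IsSymm, ← Gamma_conjTranspose, hA.eq]

open scoped MatrixOrder in
lemma posSemidef_Gamma {A : Matrix (Fin d) (Fin d) ℂ} (hA : A.PosSemidef) :
    (Gamma A).PosSemidef := by
  obtain ⟨B, rfl⟩ := CStarAlgebra.nonneg_iff_eq_star_mul_self.mp hA.nonneg
  rw [star_eq_conjTranspose, Gamma_mul, Gamma_conjTranspose,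
    ← conjTranspose_eq_transpose_of_trivial]
  exact posSemidef_conjTranspose_mul_self _

end

theorem single_partite_embedding {d : ℕ} (ρ E : Matrix (Fin d) (Fin d) ℂ)
    (hρ : ρ.PosSemidef) (hρtr : ρ.trace = 1) (hE : E.IsHermitian) :
    (ρ * E).trace = ((((1 / 2 : ℝ) • Gamma ρ) * Gamma E).trace : ℂ) ∧
      ((1 / 2 : ℝ) • Gamma ρ).IsSymm ∧
      ((1 / 2 : ℝ) • Gamma ρ).PosSemidef ∧
      ((1 / 2 : ℝ) • Gamma ρ).trace = 1 := by
  refine ⟨?_, (isSymm_Gamma hρ.isHermitian).smul _, (posSemidef_Gamma hρ).smul (by norm_num), ?_⟩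
  · rw [smul_mul_assoc, trace_smul, ← Gamma_mul, trace_Gamma, smul_eq_mul, ← mul_assoc]
    norm_num [hρ.isHermitian.ofReal_re_trace_mul hE]
  · rw [trace_smul, trace_Gamma, hρtr]
    norm_num
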